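/- arXiv:1606.07834 — 7 statements merged into one kernel-verified Lean document; each statement's English description precedes it below -/
import Mathlib

section
/- Let n ≥ 1, let A and B be 2n×2n complex matrices, let γ ∈ ℂ, and let d : Fin n → ℝ with sin(d_j) ≠ 0 for every j. Let E, C, S be the n×n diagonal matrices E = diag(e^{i d_j}), C = diag(cos d_j / sin d_j), S = diag(1 / sin d_j). Then det( A · fromBlocks(I, I, E, E⁻¹) + (iγ) • ( B · fromBlocks(−I, I, E, −E⁻¹) ) ) = ( ∏_{j} (−2i·sin d_j) ) · det( A + γ • ( B · fromBlocks(C, −S, −S, C) ) ). -/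
/-!
Write `E = diag(e^{i d_j})` and `M = [[I, I], [E, E⁻¹]]`. Since `e^{±i d} = cos d ± i sin d`,
a direct computation on the diagonal blocks gives `[[C, -S], [-S, C]] * M = i • [[-I, I], [E, -E⁻¹]]`,
so the matching matrix factors as `(A + γ B [[C, -S], [-S, C]]) * M`. Finally
`det M = det (E⁻¹ - E) = ∏_j (-2i sin d_j)`.
-/

open Matrix Complex

section

variable {K : Type*} [Field K] {c s u : K}

theorem div_add_neg_one_div_mul_add_mul (hs : s ≠ 0) : c / s + -(1 / s) * (c + s * u) = -u := by
  field_simp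
  ring

theorem neg_one_div_add_div_mul_add_mul (hs : s ≠ 0) (hcs : c ^ 2 + s ^ 2 = 1)
    (hu : u ^ 2 = -1) : -(1 / s) + c / s * (c + s * u) = u * (c + s * u) := by
  field_simp
  linear_combination hcs - s ^ 2 * hu

theorem add_mul_mul_sub_mul (hcs : c ^ 2 + s ^ 2 = 1) (hu : u ^ 2 = -1) :
    (c + s * u) * (c - s * u) = 1 := by
  linear_combination hcs - s ^ 2 * hu

end

namespace Matrix

variable {ι R : Type*} [Fintype ι]

theorem mul_add_smul_mul_eq_add_smul_mul_mul [CommRing R] {A B K M N : Matrix ι ι R} {u : R}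
    (γ : R) (hKM : K * M = u • N) :
    A * M + (u * γ) • (B * N) = (A + γ • (B * K)) * M := by
  rw [Matrix.add_mul, Matrix.smul_mul, Matrix.mul_assoc, hKM, Matrix.mul_smul, smul_smul,
    mul_comm u]

variable [DecidableEq ι]

theorem det_fromBlocks_one_one_diagonal [CommRing R] (e f : ι → R) :
    (fromBlocks 1 1 (diagonal e) (diagonal f)).det = ∏ j, (f j - e j) := by
  rw [det_fromBlocks_one₁₁, Matrix.mul_one, diagonal_sub, det_diagonal]

variable {K : Type*} [Field K] {c s : ι → K} {u : K}

theorem inv_diagonal_add_mul (hcs : ∀ j, c j ^ 2 + s j ^ 2 = 1) (hu : u ^ 2 = -1) :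
    (diagonal fun j => c j + s j * u)⁻¹ = diagonal fun j => c j - s j * u := by
  refine inv_eq_right_inv ?_
  rw [diagonal_mul_diagonal]
  simp only [add_mul_mul_sub_mul (hcs _) hu, diagonal_one]

/-- For `c = cos d`, `s = sin d`, `u = i` this is `[[C, -S], [-S, C]] * M = i • [[-I, I], [E, -E⁻¹]]`. -/
theorem fromBlocks_cot_csc_mul_fromBlocks (hs : ∀ j, s j ≠ 0) (hcs : ∀ j, c j ^ 2 + s j ^ 2 = 1)
    (hu : u ^ 2 = -1) :
    fromBlocks (diagonal fun j => c j / s j) (-diagonal fun j => 1 / s j)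
        (-diagonal fun j => 1 / s j) (diagonal fun j => c j / s j) *
      fromBlocks 1 1 (diagonal fun j => c j + s j * u) (diagonal fun j => c j - s j * u) =
    u • fromBlocks (-1) 1 (diagonal fun j => c j + s j * u)
      (-diagonal fun j => c j - s j * u) := by
  have hsub : ∀ j, c j - s j * u = c j + s j * -u := fun j => by ring
  simp only [hsub]
  rw [fromBlocks_multiply, fromBlocks_smul]
  simp only [Matrix.mul_one, diagonal_neg, diagonal_mul_diagonal, diagonal_add, smul_neg,
    smul_one_eq_diagonal, ← diagonal_smul, Pi.smul_def, smul_eq_mul, neg_neg,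
    div_add_neg_one_div_mul_add_mul (hs _), neg_one_div_add_div_mul_add_mul (hs _) (hcs _) hu,
    neg_one_div_add_div_mul_add_mul (hs _) (hcs _) (u := -u) (by rwa [neg_sq])]
  simp only [neg_mul, mul_neg]

end Matrix

theorem dirac_matching_to_secular_det_general
    (n : ℕ)
    (A B : Matrix (Fin n ⊕ Fin n) (Fin n ⊕ Fin n) ℂ)
    (γ : ℂ) (d : Fin n → ℝ) (hd : ∀ j, Real.sin (d j) ≠ 0) :
    (A * Matrix.fromBlocks 1 1
        (Matrix.diagonal fun j => Complex.exp (Complex.I * d j))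
        (Matrix.diagonal fun j => Complex.exp (Complex.I * d j))⁻¹ +
      (Complex.I * γ) •
        (B * Matrix.fromBlocks (-1) 1
          (Matrix.diagonal fun j => Complex.exp (Complex.I * d j))
          (-(Matrix.diagonal fun j => Complex.exp (Complex.I * d j))⁻¹))).det =
    (∏ j, (-(2 * Complex.I) * (Real.sin (d j) : ℂ))) *
      (A + γ •
        (B * Matrix.fromBlocks
          (Matrix.diagonal fun j => ((Real.cos (d j) / Real.sin (d j) : ℝ) : ℂ))
          (-(Matrix.diagonal fun j => ((1 / Real.sin (d j) : ℝ) : ℂ)))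
          (-(Matrix.diagonal fun j => ((1 / Real.sin (d j) : ℝ) : ℂ)))
          (Matrix.diagonal fun j => ((Real.cos (d j) / Real.sin (d j) : ℝ) : ℂ)))).det := by
  have hs (j : Fin n) : (Real.sin (d j) : ℂ) ≠ 0 := ofReal_ne_zero.mpr (hd j)
  have hcs (j : Fin n) : (Real.cos (d j) : ℂ) ^ 2 + (Real.sin (d j) : ℂ) ^ 2 = 1 := by
    exact_mod_cast Real.cos_sq_add_sin_sq (d j)
  have hexp (x : ℝ) : exp (I * x) = Real.cos x + Real.sin x * I := by
    rw [mul_comm, exp_ofReal_mul_I]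
  simp only [hexp, ofReal_div, ofReal_one, inv_diagonal_add_mul hcs I_sq]
  rw [mul_add_smul_mul_eq_add_smul_mul_mul γ (fromBlocks_cot_csc_mul_fromBlocks hs hcs I_sq),
    det_mul, det_fromBlocks_one_one_diagonal, mul_comm]
  congr 2 with j
  ring

/-- The determinant identity converting the plane-wave matching determinant into the secular
determinant: `det(A·[[I,I],[E,E⁻¹]] + iγ B·[[−I,I],[E,−E⁻¹]])
  = (∏_j (−2i sin d_j)) det(A + γ B·[[C,−S],[−S,C]])`
with `E = diag(e^{i d_j})`, `C = diag(cot d_j)`, `S = diag(csc d_j)`. -/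
theorem dirac_matching_to_secular_det
    (n : ℕ) (hn : 1 ≤ n)
    (A B : Matrix (Fin n ⊕ Fin n) (Fin n ⊕ Fin n) ℂ)
    (γ : ℂ) (d : Fin n → ℝ) (hd : ∀ j, Real.sin (d j) ≠ 0) :
    (A * Matrix.fromBlocks 1 1
        (Matrix.diagonal fun j => Complex.exp (Complex.I * d j))
        (Matrix.diagonal fun j => Complex.exp (Complex.I * d j))⁻¹ +
      (Complex.I * γ) •
        (B * Matrix.fromBlocks (-1) 1
          (Matrix.diagonal fun j => Complex.exp (Complex.I * d j))
          (-(Matrix.diagonal fun j => Complex.exp (Complex.I * d j))⁻¹))).det =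
    (∏ j, (-(2 * Complex.I) * (Real.sin (d j) : ℂ))) *
      (A + γ •
        (B * Matrix.fromBlocks
          (Matrix.diagonal fun j => ((Real.cos (d j) / Real.sin (d j) : ℝ) : ℂ))
          (-(Matrix.diagonal fun j => ((1 / Real.sin (d j) : ℝ) : ℂ)))
          (-(Matrix.diagonal fun j => ((1 / Real.sin (d j) : ℝ) : ℂ)))
          (Matrix.diagonal fun j => ((Real.cos (d j) / Real.sin (d j) : ℝ) : ℂ)))).det :=
  dirac_matching_to_secular_det_general n A B γ d hd
end

section
/- Let B ≥ 1, and for each b ∈ Fin B let u_o^b, u_t^b ∈ SU(2), L_b > 0, and let k ∈ ℝ satisfy sin(kL_b) ≠ 0 for all b; let γ ∈ ℂ and let Ã, B̃ be 2B×2B complex matrices. Index 2B×2B matrices by Fin B × Fin 2 and set: C = (diag_b cot(kL_b)) ⊗ I₂ and S = (diag_b csc(kL_b)) ⊗ I₂ (Kronecker products), U_o and U_t the block-diagonal matrices with 2×2 diagonal blocks u_o^b resp. u_t^b, U = fromBlocks(U_o, 0, 0, U_t), and W the block-diagonal matrix with 2×2 diagonal blocks w^b = u_o^b (u_t^b)⁻¹.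 Then det( (Ã ⊗ I₂)·U + γ • ( (B̃ ⊗ I₂)·U·fromBlocks(C, −S, −S, C) ) ) = det( (Ã ⊗ I₂) + γ • ( (B̃ ⊗ I₂)·fromBlocks(C, −S·W, −S·W⁻¹, C) ) ). -/
set_option linter.unusedSectionVars false
open Matrix Kronecker

variable {n : Type*} [Fintype n] [DecidableEq n]

/-- block diagonal with block index first -/
def myBD (f : n → Matrix (Fin 2) (Fin 2) ℂ) : Matrix (n × Fin 2) (n × Fin 2) ℂ :=
  Matrix.of fun p q => if p.1 = q.1 then f p.1 p.2 q.2 else 0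

lemma myBD_mul (f g : n → Matrix (Fin 2) (Fin 2) ℂ) :
    myBD f * myBD g = myBD (fun b => f b * g b) := by
  ext ⟨b, s⟩ ⟨b', s'⟩
  simp only [myBD, Matrix.mul_apply, Matrix.of_apply, Fintype.sum_prod_type]
  rcases eq_or_ne b b' with h | h
  · subst h
    simp [Finset.sum_eq_single b, Matrix.mul_apply]
  · simp [h]

lemma myBD_one : myBD (fun _ : n => (1 : Matrix (Fin 2) (Fin 2) ℂ)) = 1 := by
  ext ⟨b, s⟩ ⟨b', s'⟩
  simp [myBD, Matrix.one_apply, Prod.ext_iff, and_comm]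
  aesop

lemma myBD_det (f : n → Matrix (Fin 2) (Fin 2) ℂ) :
    (myBD f).det = ∏ b, (f b).det := by
  have : myBD f = (Matrix.blockDiagonal f).submatrix
      (Equiv.prodComm n (Fin 2)) (Equiv.prodComm n (Fin 2)) := by
    ext ⟨b, s⟩ ⟨b', s'⟩
    simp [myBD, Matrix.blockDiagonal_apply, eq_comm]
  rw [this, Matrix.det_submatrix_equiv_self, Matrix.det_blockDiagonal]

lemma diag_kron_eq_myBD (d : n → ℂ) :
    (Matrix.diagonal d) ⊗ₖ (1 : Matrix (Fin 2) (Fin 2) ℂ) = myBD (fun b => d b • 1) := by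
  ext ⟨b, s⟩ ⟨b', s'⟩
  simp [myBD, Matrix.diagonal_apply, Matrix.kroneckerMap_apply, ite_mul, Matrix.smul_apply]

/-- Simplification of the secular determinant for time-reversal symmetric vertex conditions
`A = (Ã⊗I₂)U`, `B = (B̃⊗I₂)U`: the block-diagonal spin matrix `U` can be eliminated in favour of
the bond spin rotations `w^b = u_o^b (u_t^b)⁻¹`. -/
theorem dirac_time_reversal_secular_simplification
    (B : ℕ) (hB : 1 ≤ B)
    (uo ut : Fin B → Matrix.specialUnitaryGroup (Fin 2) ℂ)
    (L : Fin B → ℝ) (hL : ∀ b, 0 < L b)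
    (k : ℝ) (hk : ∀ b, Real.sin (k * L b) ≠ 0)
    (γ : ℂ) (At Bt : Matrix (Fin B ⊕ Fin B) (Fin B ⊕ Fin B) ℂ) :
    let e : (Fin B ⊕ Fin B) × Fin 2 ≃ (Fin B × Fin 2) ⊕ (Fin B × Fin 2) :=
      Equiv.sumProdDistrib (Fin B) (Fin B) (Fin 2)
    let lift : Matrix (Fin B ⊕ Fin B) (Fin B ⊕ Fin B) ℂ →
        Matrix ((Fin B × Fin 2) ⊕ (Fin B × Fin 2)) ((Fin B × Fin 2) ⊕ (Fin B × Fin 2)) ℂ :=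
      fun X => Matrix.reindex e e (X ⊗ₖ (1 : Matrix (Fin 2) (Fin 2) ℂ))
    let C : Matrix (Fin B × Fin 2) (Fin B × Fin 2) ℂ :=
      (Matrix.diagonal fun b => ((Real.cos (k * L b) / Real.sin (k * L b) : ℝ) : ℂ)) ⊗ₖ
        (1 : Matrix (Fin 2) (Fin 2) ℂ)
    let S : Matrix (Fin B × Fin 2) (Fin B × Fin 2) ℂ :=
      (Matrix.diagonal fun b => ((1 / Real.sin (k * L b) : ℝ) : ℂ)) ⊗ₖ
        (1 : Matrix (Fin 2) (Fin 2) ℂ)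
    let Uo : Matrix (Fin B × Fin 2) (Fin B × Fin 2) ℂ :=
      Matrix.of fun p q =>
        if p.1 = q.1 then (uo p.1 : Matrix (Fin 2) (Fin 2) ℂ) p.2 q.2 else 0
    let Ut : Matrix (Fin B × Fin 2) (Fin B × Fin 2) ℂ :=
      Matrix.of fun p q =>
        if p.1 = q.1 then (ut p.1 : Matrix (Fin 2) (Fin 2) ℂ) p.2 q.2 else 0
    let U := Matrix.fromBlocks Uo 0 0 Ut
    let W : Matrix (Fin B × Fin 2) (Fin B × Fin 2) ℂ :=
      Matrix.of fun p q =>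
        if p.1 = q.1 then
          ((uo p.1 : Matrix (Fin 2) (Fin 2) ℂ) * (ut p.1 : Matrix (Fin 2) (Fin 2) ℂ)⁻¹) p.2 q.2
        else 0
    (lift At * U + γ • (lift Bt * U * Matrix.fromBlocks C (-S) (-S) C)).det =
      (lift At + γ • (lift Bt * Matrix.fromBlocks C (-(S * W)) (-(S * W⁻¹)) C)).det := by
  intro e lift C S Uo Ut U W
  have hduo : ∀ b, ((uo b : Matrix (Fin 2) (Fin 2) ℂ)).det = 1 := fun b =>
    ((Matrix.mem_specialUnitaryGroup_iff.mp (uo b).2).2)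
  have hdut : ∀ b, ((ut b : Matrix (Fin 2) (Fin 2) ℂ)).det = 1 := fun b =>
    ((Matrix.mem_specialUnitaryGroup_iff.mp (ut b).2).2)
  have hiut : ∀ b, ((ut b : Matrix (Fin 2) (Fin 2) ℂ))⁻¹ * (ut b : Matrix (Fin 2) (Fin 2) ℂ) = 1 :=
    fun b => Matrix.nonsing_inv_mul _ (by rw [hdut]; exact isUnit_one)
  have hiuo : ∀ b, ((uo b : Matrix (Fin 2) (Fin 2) ℂ))⁻¹ * (uo b : Matrix (Fin 2) (Fin 2) ℂ) = 1 :=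
    fun b => Matrix.nonsing_inv_mul _ (by rw [hduo]; exact isUnit_one)
  have hiut' : ∀ b, (ut b : Matrix (Fin 2) (Fin 2) ℂ) * ((ut b : Matrix (Fin 2) (Fin 2) ℂ))⁻¹ = 1 :=
    fun b => Matrix.mul_nonsing_inv _ (by rw [hdut]; exact isUnit_one)
  have hiuo' : ∀ b, (uo b : Matrix (Fin 2) (Fin 2) ℂ) * ((uo b : Matrix (Fin 2) (Fin 2) ℂ))⁻¹ = 1 :=
    fun b => Matrix.mul_nonsing_inv _ (by rw [hduo]; exact isUnit_one)
  have hUo : Uo = myBD (fun b => (uo b : Matrix (Fin 2) (Fin 2) ℂ)) := rfl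
  have hUt : Ut = myBD (fun b => (ut b : Matrix (Fin 2) (Fin 2) ℂ)) := rfl
  have hW : W = myBD (fun b =>
      (uo b : Matrix (Fin 2) (Fin 2) ℂ) * ((ut b : Matrix (Fin 2) (Fin 2) ℂ))⁻¹) := rfl
  have hC : C = myBD (fun b => ((Real.cos (k * L b) / Real.sin (k * L b) : ℝ) : ℂ) • 1) :=
    diag_kron_eq_myBD _
  have hS : S = myBD (fun b => ((1 / Real.sin (k * L b) : ℝ) : ℂ) • 1) :=
    diag_kron_eq_myBD _
  have hWinv : W⁻¹ = myBD (fun b =>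
      (ut b : Matrix (Fin 2) (Fin 2) ℂ) * ((uo b : Matrix (Fin 2) (Fin 2) ℂ))⁻¹) := by
    apply Matrix.inv_eq_right_inv
    rw [hW, myBD_mul, ← myBD_one]
    refine congrArg myBD (funext fun b => ?_)
    rw [mul_assoc, ← mul_assoc ((ut b : Matrix (Fin 2) (Fin 2) ℂ))⁻¹, hiut b, one_mul, hiuo' b]
  have h1 : Uo * C = C * Uo := by
    rw [hUo, hC, myBD_mul, myBD_mul]
    refine congrArg myBD (funext fun b => ?_)
    rw [mul_smul_comm, smul_mul_assoc, mul_one, one_mul]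
  have h2 : Ut * C = C * Ut := by
    rw [hUt, hC, myBD_mul, myBD_mul]
    refine congrArg myBD (funext fun b => ?_)
    rw [mul_smul_comm, smul_mul_assoc, mul_one, one_mul]
  have h3 : Uo * S = S * W * Ut := by
    rw [hUo, hS, hW, hUt, myBD_mul, myBD_mul, myBD_mul]
    refine congrArg myBD (funext fun b => ?_)
    rw [mul_smul_comm, smul_mul_assoc, smul_mul_assoc, one_mul, mul_one, mul_assoc, hiut b,
      mul_one]
  have h4 : Ut * S = S * W⁻¹ * Uo := by
    rw [hUt, hS, hWinv, hUo, myBD_mul, myBD_mul, myBD_mul]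
    refine congrArg myBD (funext fun b => ?_)
    rw [mul_smul_comm, smul_mul_assoc, smul_mul_assoc, one_mul, mul_one, mul_assoc, hiuo b,
      mul_one]
  have key : U * Matrix.fromBlocks C (-S) (-S) C =
      Matrix.fromBlocks C (-(S * W)) (-(S * W⁻¹)) C * U := by
    show Matrix.fromBlocks Uo 0 0 Ut * _ = _ * Matrix.fromBlocks Uo 0 0 Ut
    rw [Matrix.fromBlocks_multiply, Matrix.fromBlocks_multiply]
    simp only [Matrix.zero_mul, Matrix.mul_zero, neg_zero, add_zero, zero_add, Matrix.mul_neg,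
      Matrix.neg_mul, h1, h2]
    rw [h3, h4]
  have hdetU : U.det = 1 := by
    show (Matrix.fromBlocks Uo 0 0 Ut).det = 1
    rw [Matrix.det_fromBlocks_zero₂₁, hUo, hUt, myBD_det, myBD_det]
    simp [hduo, hdut]
  have split : lift At * U + γ • (lift Bt * U * Matrix.fromBlocks C (-S) (-S) C) =
      (lift At + γ • (lift Bt * Matrix.fromBlocks C (-(S * W)) (-(S * W⁻¹)) C)) * U := by
    rw [mul_assoc, key, ← mul_assoc, add_mul, Matrix.smul_mul]
  rw [split, Matrix.det_mul, hdetU, mul_one]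
end

section
/- Let B ≥ 1, let Ã, B̃ be B×B complex matrices, γ ∈ ℂ, θ : Fin B → ℝ, and let L_b > 0 and k ∈ ℝ with sin(kL_b) ≠ 0 for all b. Let C = diag_b(cot(kL_b)) and S = diag_b(csc(kL_b)) be B×B diagonal matrices, and E₊ = diag_b(e^{iθ_b}), E₋ = diag_b(e^{−iθ_b}). Index 2B×2B matrices by Fin B × Fin 2 and let D be the diagonal matrix with D(b,0) = e^{iθ_b} and D(b,1) = e^{−iθ_b}. Then det( (Ã ⊗ I₂) + γ • ( (B̃ ⊗ I₂) · fromBlocks(C ⊗ I₂, −(S ⊗ I₂)·D, −(S ⊗ I₂)·D⁻¹, C ⊗ I₂) ) ) = det( Ã + γ • ( B̃ · fromBlocks(C, −S·E₊, −S·E₋, C) ) ) · det( Ã + γ • ( B̃ · fromBlocks(C, −S·E₋, −S·E₊, C) ) ). -/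
open Matrix Kronecker

lemma kron_one_eq_blockDiagonal' {α : Type*} [Fintype α] [DecidableEq α]
    (X : Matrix α α ℂ) :
    X ⊗ₖ (1 : Matrix (Fin 2) (Fin 2) ℂ) = blockDiagonal (fun _ : Fin 2 => X) := by
  ext ⟨a, i⟩ ⟨b, j⟩
  simp [Matrix.kroneckerMap_apply, Matrix.blockDiagonal_apply, Matrix.one_apply, mul_ite]

lemma reindex_fromBlocks_blockDiagonal' {B : ℕ}
    (p q r t : Fin 2 → Matrix (Fin B) (Fin B) ℂ) :
    Matrix.reindex (Equiv.sumProdDistrib (Fin B) (Fin B) (Fin 2)).symm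
        (Equiv.sumProdDistrib (Fin B) (Fin B) (Fin 2)).symm
        (Matrix.fromBlocks (blockDiagonal p) (blockDiagonal q) (blockDiagonal r)
          (blockDiagonal t)) =
      blockDiagonal (fun j => Matrix.fromBlocks (p j) (q j) (r j) (t j)) := by
  ext ⟨x, i⟩ ⟨y, j⟩
  cases x <;> cases y <;>
    simp [Matrix.blockDiagonal_apply, Matrix.fromBlocks, Equiv.sumProdDistrib]

/-- Factorization of the `4B×4B` time-reversal-invariant secular determinant (with the bond
spin rotations diagonalized to phases `e^{±iθ_b}`) into the product of two `2B×2B`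
determinants, obtained by separating odd and even rows and columns. -/
theorem dirac_time_reversal_secular_factorization
    (B : ℕ) (hB : 1 ≤ B)
    (At Bt : Matrix (Fin B ⊕ Fin B) (Fin B ⊕ Fin B) ℂ)
    (γ : ℂ) (θ : Fin B → ℝ)
    (L : Fin B → ℝ) (hL : ∀ b, 0 < L b)
    (k : ℝ) (hk : ∀ b, Real.sin (k * L b) ≠ 0) :
    let e : (Fin B ⊕ Fin B) × Fin 2 ≃ (Fin B × Fin 2) ⊕ (Fin B × Fin 2) :=
      Equiv.sumProdDistrib (Fin B) (Fin B) (Fin 2)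
    let lift : Matrix (Fin B ⊕ Fin B) (Fin B ⊕ Fin B) ℂ →
        Matrix ((Fin B × Fin 2) ⊕ (Fin B × Fin 2)) ((Fin B × Fin 2) ⊕ (Fin B × Fin 2)) ℂ :=
      fun X => Matrix.reindex e e (X ⊗ₖ (1 : Matrix (Fin 2) (Fin 2) ℂ))
    let C : Matrix (Fin B) (Fin B) ℂ :=
      Matrix.diagonal fun b => ((Real.cos (k * L b) / Real.sin (k * L b) : ℝ) : ℂ)
    let S : Matrix (Fin B) (Fin B) ℂ :=
      Matrix.diagonal fun b => ((1 / Real.sin (k * L b) : ℝ) : ℂ)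
    let Ep : Matrix (Fin B) (Fin B) ℂ :=
      Matrix.diagonal fun b => Complex.exp (Complex.I * θ b)
    let Em : Matrix (Fin B) (Fin B) ℂ :=
      Matrix.diagonal fun b => Complex.exp (-(Complex.I * θ b))
    let D : Matrix (Fin B × Fin 2) (Fin B × Fin 2) ℂ :=
      Matrix.diagonal fun p =>
        if p.2 = 0 then Complex.exp (Complex.I * θ p.1) else Complex.exp (-(Complex.I * θ p.1))
    (lift At + γ • (lift Bt * Matrix.fromBlocks
        (C ⊗ₖ (1 : Matrix (Fin 2) (Fin 2) ℂ))
        (-((S ⊗ₖ (1 : Matrix (Fin 2) (Fin 2) ℂ)) * D))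
        (-((S ⊗ₖ (1 : Matrix (Fin 2) (Fin 2) ℂ)) * D⁻¹))
        (C ⊗ₖ (1 : Matrix (Fin 2) (Fin 2) ℂ)))).det =
      (At + γ • (Bt * Matrix.fromBlocks C (-(S * Ep)) (-(S * Em)) C)).det *
        (At + γ • (Bt * Matrix.fromBlocks C (-(S * Em)) (-(S * Ep)) C)).det := by
  intro e lift C S Ep Em D
  -- D and D⁻¹ as block diagonal matrices
  have hD : D = blockDiagonal (fun j : Fin 2 => if j = 0 then Ep else Em) := by
    ext ⟨b, i⟩ ⟨b', j⟩
    by_cases hij : i = j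
    · subst hij
      by_cases hb : b = b'
      · subst hb
        by_cases hi : i = 0 <;>
          simp [D, Ep, Em, Matrix.diagonal_apply, Matrix.blockDiagonal_apply, hi]
      · by_cases hi : i = 0 <;>
          simp [D, Ep, Em, Matrix.diagonal_apply, Matrix.blockDiagonal_apply, hb,
            Prod.ext_iff, hi]
    · simp [D, Matrix.diagonal_apply, Matrix.blockDiagonal_apply, hij, Prod.ext_iff]
  have hDinv : D⁻¹ = blockDiagonal (fun j : Fin 2 => if j = 0 then Em else Ep) := by
    have h1 : D * blockDiagonal (fun j : Fin 2 => if j = 0 then Em else Ep) = 1 := by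
      rw [hD, ← Matrix.blockDiagonal_mul]
      have h2 : (fun j : Fin 2 => (if j = 0 then Ep else Em) * (if j = 0 then Em else Ep)) =
          fun _ : Fin 2 => (1 : Matrix (Fin B) (Fin B) ℂ) := by
        funext j
        by_cases hj : j = 0 <;>
          simp [hj, Ep, Em, Matrix.diagonal_mul_diagonal, ← Complex.exp_add]
      rw [h2]
      exact Matrix.blockDiagonal_one
    exact Matrix.inv_eq_right_inv h1
  -- rewrite the big matrix as a block diagonal matrix
  set F : Fin 2 → Matrix (Fin B ⊕ Fin B) (Fin B ⊕ Fin B) ℂ := fun j =>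
    At + γ • (Bt * Matrix.fromBlocks C
      (-(S * (if j = 0 then Ep else Em)))
      (-(S * (if j = 0 then Em else Ep))) C) with hF
  have key : Matrix.reindex e.symm e.symm
      (lift At + γ • (lift Bt * Matrix.fromBlocks
        (C ⊗ₖ (1 : Matrix (Fin 2) (Fin 2) ℂ))
        (-((S ⊗ₖ (1 : Matrix (Fin 2) (Fin 2) ℂ)) * D))
        (-((S ⊗ₖ (1 : Matrix (Fin 2) (Fin 2) ℂ)) * D⁻¹))
        (C ⊗ₖ (1 : Matrix (Fin 2) (Fin 2) ℂ)))) = blockDiagonal F := by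
    have hlift : ∀ X, Matrix.reindex e.symm e.symm (lift X) =
        blockDiagonal (fun _ : Fin 2 => X) := by
      intro X
      simp only [lift]
      rw [← Matrix.reindex_symm]
      rw [Equiv.symm_apply_apply]
      exact kron_one_eq_blockDiagonal' X
    have hFB : Matrix.reindex e.symm e.symm (Matrix.fromBlocks
        (C ⊗ₖ (1 : Matrix (Fin 2) (Fin 2) ℂ))
        (-((S ⊗ₖ (1 : Matrix (Fin 2) (Fin 2) ℂ)) * D))
        (-((S ⊗ₖ (1 : Matrix (Fin 2) (Fin 2) ℂ)) * D⁻¹))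
        (C ⊗ₖ (1 : Matrix (Fin 2) (Fin 2) ℂ))) =
        blockDiagonal (fun j : Fin 2 => Matrix.fromBlocks C
          (-(S * (if j = 0 then Ep else Em)))
          (-(S * (if j = 0 then Em else Ep))) C) := by
      rw [kron_one_eq_blockDiagonal' C, kron_one_eq_blockDiagonal' S, hDinv, hD,
        ← Matrix.blockDiagonal_mul]
      have hneg : ∀ f : Fin 2 → Matrix (Fin B) (Fin B) ℂ,
          -(blockDiagonal f) = blockDiagonal (fun j => -(f j)) := by
        intro f; exact (Matrix.blockDiagonal_neg f).symm
      rw [hneg]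
      rw [← Matrix.blockDiagonal_mul
        (fun _ : Fin 2 => S) (fun j : Fin 2 => if j = 0 then Em else Ep), hneg]
      exact reindex_fromBlocks_blockDiagonal' _ _ _ _
    have hPhi : ∀ M, Matrix.reindexAlgEquiv ℂ ℂ e.symm M = Matrix.reindex e.symm e.symm M :=
      fun _ => rfl
    rw [← hPhi, map_add, _root_.map_smul, _root_.map_mul, hPhi, hPhi, hPhi, hlift, hlift, hFB,
      ← Matrix.blockDiagonal_mul, ← Matrix.blockDiagonal_smul, ← Matrix.blockDiagonal_add]
    rfl
  calc (lift At + γ • (lift Bt * Matrix.fromBlocks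
        (C ⊗ₖ (1 : Matrix (Fin 2) (Fin 2) ℂ))
        (-((S ⊗ₖ (1 : Matrix (Fin 2) (Fin 2) ℂ)) * D))
        (-((S ⊗ₖ (1 : Matrix (Fin 2) (Fin 2) ℂ)) * D⁻¹))
        (C ⊗ₖ (1 : Matrix (Fin 2) (Fin 2) ℂ)))).det
      = (Matrix.reindex e.symm e.symm
        (lift At + γ • (lift Bt * Matrix.fromBlocks
        (C ⊗ₖ (1 : Matrix (Fin 2) (Fin 2) ℂ))
        (-((S ⊗ₖ (1 : Matrix (Fin 2) (Fin 2) ℂ)) * D))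
        (-((S ⊗ₖ (1 : Matrix (Fin 2) (Fin 2) ℂ)) * D⁻¹))
        (C ⊗ₖ (1 : Matrix (Fin 2) (Fin 2) ℂ))))).det := (Matrix.det_reindex_self _ _).symm
    _ = (blockDiagonal F).det := by rw [key]
    _ = ∏ j : Fin 2, (F j).det := Matrix.det_blockDiagonal F
    _ = (F 0).det * (F 1).det := Fin.prod_univ_two _
    _ = _ := by simp [hF]
end

section
/- Let B ≥ 1, L_b > 0 and θ_b ∈ ℝ for b ∈ Fin B, and let α ∈ (0, π). Define f̂ : ℝ → ℂ by f̂(u) = ∑_{b=1}^{B} (cos θ_b − cos(L_b e^{iα} u)) / sin(L_b e^{iα} u). Then (a) for every u > 0, f̂ has derivative f̂′(u) = e^{iα} ∑_{b=1}^{B} L_b (1 − cos θ_b · cos(u L_b e^{iα})) / sin²(u L_b e^{iα}) at u; and (b) there exists c > 0 such that f̂′(u) = O(e^{−cu}) as u → +∞. -/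
open scoped Topology

/-! Along the ray `u ↦ u L e^{iα}` the imaginary part `y = u L sin α` grows linearly.
Since `‖cos w‖ ≤ cosh (Im w)` and `‖sin w‖ ≥ sinh |Im w|`, each summand of `f̂′` has
numerator `O(e^y)` and denominator at least `e^{2y}/16`, hence is `O(e^{-y})`; any `c > 0`
below every `L_b sin α` is then a common decay rate. The formula for `f̂′` is the quotient
rule together with `sin² + cos² = 1`. -/

namespace Complex

lemma norm_sin_sq (w : ℂ) : ‖sin w‖ ^ 2 = Real.sin w.re ^ 2 + Real.sinh w.im ^ 2 := by
  have hsin : sin w =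
      (Real.sin w.re * Real.cosh w.im : ℝ) + (Real.cos w.re * Real.sinh w.im : ℝ) * I := by
    conv_lhs => rw [← re_add_im w]
    push_cast
    rw [sin_add_mul_I]
  rw [hsin, Complex.sq_norm, normSq_add_mul_I]
  linear_combination Real.sin w.re ^ 2 * Real.cosh_sq w.im
    + Real.sinh w.im ^ 2 * Real.sin_sq_add_cos_sq w.re

lemma norm_cos_sq (w : ℂ) : ‖cos w‖ ^ 2 = Real.cos w.re ^ 2 + Real.sinh w.im ^ 2 := by
  have hcos : cos w =
      (Real.cos w.re * Real.cosh w.im : ℝ) + (-(Real.sin w.re * Real.sinh w.im) : ℝ) * I := by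
    conv_lhs => rw [← re_add_im w]
    push_cast
    rw [cos_add_mul_I]
    ring
  rw [hcos, Complex.sq_norm, normSq_add_mul_I]
  linear_combination Real.cos w.re ^ 2 * Real.cosh_sq w.im
    + Real.sinh w.im ^ 2 * Real.sin_sq_add_cos_sq w.re

lemma sinh_abs_im_le_norm_sin (w : ℂ) : Real.sinh |w.im| ≤ ‖sin w‖ := by
  refine abs_le_of_sq_le_sq' ?_ (norm_nonneg _) |>.2
  rw [norm_sin_sq, ← Real.abs_sinh, sq_abs]
  nlinarith [sq_nonneg (Real.sin w.re)]

lemma norm_cos_le_cosh_im (w : ℂ) : ‖cos w‖ ≤ Real.cosh w.im := by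
  refine le_of_sq_le_sq ?_ (Real.cosh_pos _).le
  rw [norm_cos_sq, Real.cosh_sq]
  nlinarith [Real.cos_sq_le_one w.re]

lemma sin_ne_zero_of_im_ne_zero {w : ℂ} (hw : w.im ≠ 0) : sin w ≠ 0 := by
  rw [← norm_pos_iff]
  exact (Real.sinh_pos_iff.2 (abs_pos.2 hw)).trans_le (sinh_abs_im_le_norm_sin w)

end Complex

lemma hasDerivAt_sub_cos_div_sin (c z w : ℂ) (hw : Complex.sin (z * w) ≠ 0) :
    HasDerivAt (fun w => (c - Complex.cos (z * w)) / Complex.sin (z * w))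
      (z * (1 - c * Complex.cos (z * w)) / Complex.sin (z * w) ^ 2) w := by
  have hlin : HasDerivAt (fun w : ℂ => z * w) z w := by
    simpa using (hasDerivAt_id w).const_mul z
  have hnum : HasDerivAt (fun w : ℂ => c - Complex.cos (z * w)) (Complex.sin (z * w) * z) w := by
    simpa using ((Complex.hasDerivAt_cos (z * w)).comp w hlin).const_sub c
  have hsin : HasDerivAt (fun w : ℂ => Complex.sin (z * w)) (Complex.cos (z * w) * z) w :=
    (Complex.hasDerivAt_sin (z * w)).comp w hlin
  have hquot : Complex.sin (z * w) * z * Complex.sin (z * w) -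
      (c - Complex.cos (z * w)) * (Complex.cos (z * w) * z) =
        z * (1 - c * Complex.cos (z * w)) := by
    linear_combination z * Complex.sin_sq_add_cos_sq (z * w)
  rw [← hquot]
  exact hnum.div hsin hw

open Asymptotics Filter

lemma Real.exp_div_four_le_sinh {y : ℝ} (hy : 1 ≤ y) : Real.exp y / 4 ≤ Real.sinh y := by
  have h2 : 2 ≤ Real.exp y := by linarith [Real.add_one_le_exp y]
  have h1 : Real.exp (-y) ≤ 1 := Real.exp_le_one_iff.2 (by linarith)
  rw [Real.sinh_eq]
  linarith

lemma norm_one_sub_mul_cos_div_sin_sq_le {c w : ℂ} (hc : ‖c‖ ≤ 1) (hw : 1 ≤ w.im) :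
    ‖(1 - c * Complex.cos w) / Complex.sin w ^ 2‖ ≤ 32 * Real.exp (-w.im) := by
  set y := w.im
  have hnum : ‖1 - c * Complex.cos w‖ ≤ 2 * Real.exp y := by
    have hcosh : Real.cosh y ≤ Real.exp y := by
      rw [Real.cosh_eq]
      linarith [Real.exp_le_exp.2 (show -y ≤ y by linarith)]
    calc ‖1 - c * Complex.cos w‖ ≤ 1 + 1 * Real.cosh y := by
          grw [norm_sub_le, norm_one, norm_mul, hc, Complex.norm_cos_le_cosh_im]
      _ ≤ 2 * Real.exp y := by linarith [Real.one_le_exp (show 0 ≤ y by linarith)]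
  have hden : Real.exp y / 4 ≤ ‖Complex.sin w‖ := by
    calc Real.exp y / 4 ≤ Real.sinh |y| := by
          rw [abs_of_nonneg (by linarith)]; exact Real.exp_div_four_le_sinh hw
      _ ≤ ‖Complex.sin w‖ := Complex.sinh_abs_im_le_norm_sin w
  calc ‖(1 - c * Complex.cos w) / Complex.sin w ^ 2‖
      ≤ 2 * Real.exp y / (Real.exp y / 4) ^ 2 := by
        rw [norm_div, norm_pow]
        gcongr
    _ = 32 * Real.exp (-y) := by
        rw [Real.exp_neg]
        field_simp
        ring

lemma isBigO_one_sub_mul_cos_div_sin_sq {c z : ℂ} (hc : ‖c‖ ≤ 1) (hz : 0 < z.im) :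
    (fun u : ℝ => (1 - c * Complex.cos (u * z)) / Complex.sin (u * z) ^ 2) =O[atTop]
      fun u => Real.exp (-z.im * u) := by
  refine IsBigO.of_bound 32 ?_
  filter_upwards [eventually_ge_atTop z.im⁻¹] with u hu
  have him : ((u : ℂ) * z).im = z.im * u := by rw [Complex.im_ofReal_mul, mul_comm]
  have h1 : 1 ≤ ((u : ℂ) * z).im := by
    rw [him, ← inv_mul_le_iff₀ hz, mul_one]; exact hu
  rw [Real.norm_of_nonneg (Real.exp_pos _).le, neg_mul, ← him]
  exact norm_one_sub_mul_cos_div_sin_sq_le hc h1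

lemma isBigO_exp_neg_mul_of_le {a c : ℝ} (h : c ≤ a) :
    (fun u : ℝ => Real.exp (-a * u)) =O[atTop] fun u => Real.exp (-c * u) := by
  refine IsBigO.of_bound 1 ?_
  filter_upwards [eventually_ge_atTop 0] with u hu
  simp only [Real.norm_of_nonneg (Real.exp_pos _).le, one_mul, Real.exp_le_exp]
  nlinarith

lemma exists_pos_forall_le_of_pos {ι : Type*} [Finite ι] {a : ι → ℝ} (ha : ∀ i, 0 < a i) :
    ∃ c, 0 < c ∧ ∀ i, c ≤ a i := by
  have hev : ∀ᶠ c in 𝓝[>] (0 : ℝ), 0 < c ∧ ∀ i, c ≤ a i :=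
    eventually_mem_nhdsWithin.and (eventually_all.2 fun i =>
      ((eventually_le_nhds (ha i)).filter_mono nhdsWithin_le_nhds))
  exact hev.exists

theorem dirac_rose_secular_derivative_and_decay_general
    (B : ℕ) (L θ : Fin B → ℝ) (hL : ∀ b, 0 < L b)
    (α : ℝ) (hα : α ∈ Set.Ioo 0 Real.pi) :
    let f : ℝ → ℂ := fun u => ∑ b, ((Real.cos (θ b) : ℂ) -
        Complex.cos (L b * Complex.exp (Complex.I * α) * u)) /
      Complex.sin (L b * Complex.exp (Complex.I * α) * u)
    (∀ u : ℝ, 0 < u →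
        HasDerivAt f
          (Complex.exp (Complex.I * α) * ∑ b, (L b : ℂ) *
            (1 - (Real.cos (θ b) : ℂ) *
              Complex.cos (u * L b * Complex.exp (Complex.I * α))) /
            Complex.sin (u * L b * Complex.exp (Complex.I * α)) ^ 2) u) ∧
    ∃ c : ℝ, 0 < c ∧
      (deriv f) =O[Filter.atTop] fun u : ℝ => Real.exp (-c * u) := by
  intro f
  set E := Complex.exp (Complex.I * α)
  have himpos : ∀ b, 0 < ((L b : ℂ) * E).im := fun b => by
    simpa [E, Complex.exp_im, mul_comm] using
      mul_pos (hL b) (Real.sin_pos_of_pos_of_lt_pi hα.1 hα.2)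
  have hcos : ∀ b, ‖(Real.cos (θ b) : ℂ)‖ ≤ 1 := fun b => by
    rw [Complex.norm_real]; exact Real.abs_cos_le_one _
  have hderiv : ∀ u : ℝ, 0 < u → HasDerivAt f
      (E * ∑ b, (L b : ℂ) * (1 - (Real.cos (θ b) : ℂ) * Complex.cos (u * L b * E)) /
        Complex.sin (u * L b * E) ^ 2) u := by
    intro u hu
    have hsin : ∀ b, Complex.sin (L b * E * u) ≠ 0 := fun b => by
      refine Complex.sin_ne_zero_of_im_ne_zero ?_
      rw [Complex.im_mul_ofReal]
      exact (mul_pos (himpos b) hu).ne'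
    refine (HasDerivAt.fun_sum fun b _ => (hasDerivAt_sub_cos_div_sin (Real.cos (θ b))
      (L b * E) u (hsin b)).comp_ofReal).congr_deriv ?_
    rw [Finset.mul_sum]
    refine Finset.sum_congr rfl fun b _ => ?_
    rw [show (u : ℂ) * L b * E = L b * E * u by ring]
    ring
  refine ⟨hderiv, ?_⟩
  obtain ⟨c, hc, hcle⟩ := exists_pos_forall_le_of_pos himpos
  refine ⟨c, hc, EventuallyEq.trans_isBigO
    ((eventually_gt_atTop 0).mono fun u hu => (hderiv u hu).deriv) ?_⟩
  refine (IsBigO.fun_sum fun b _ => ?_).const_mul_left E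
  simp only [mul_assoc, mul_div_assoc]
  exact ((isBigO_one_sub_mul_cos_div_sin_sq (hcos b) (himpos b)).const_mul_left _).trans
    (isBigO_exp_neg_mul_of_le (hcle b))

/-- (a) The secular function `f̂(u) = ∑_b (cos θ_b − cos(L_b e^{iα} u))/sin(L_b e^{iα} u)` of
the zero-mass Dirac rose graph along the branch-cut ray has, for every `u > 0`, the derivative
`f̂′(u) = e^{iα} ∑_b L_b (1 − cos θ_b cos(u L_b e^{iα}))/sin²(u L_b e^{iα})`;
(b) `f̂′` decays exponentially: `f̂′(u) = O(e^{−cu})` as `u → +∞` for some `c > 0`. -/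
theorem dirac_rose_secular_derivative_and_decay
    (B : ℕ) (hB : 1 ≤ B) (L θ : Fin B → ℝ) (hL : ∀ b, 0 < L b)
    (α : ℝ) (hα : α ∈ Set.Ioo 0 Real.pi) :
    let f : ℝ → ℂ := fun u => ∑ b, ((Real.cos (θ b) : ℂ) -
        Complex.cos (L b * Complex.exp (Complex.I * α) * u)) /
      Complex.sin (L b * Complex.exp (Complex.I * α) * u)
    (∀ u : ℝ, 0 < u →
        HasDerivAt f
          (Complex.exp (Complex.I * α) * ∑ b, (L b : ℂ) *
            (1 - (Real.cos (θ b) : ℂ) *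
              Complex.cos (u * L b * Complex.exp (Complex.I * α))) /
            Complex.sin (u * L b * Complex.exp (Complex.I * α)) ^ 2) u) ∧
    ∃ c : ℝ, 0 < c ∧
      (deriv f) =O[Filter.atTop] fun u : ℝ => Real.exp (-c * u) :=
  dirac_rose_secular_derivative_and_decay_general B L θ hL α hα
end

section
/- Let n ≥ 1, let L : Fin n → ℝ with L_j > 0, and let A, B be 2n×2n complex matrices. Then the function z ↦ det( z • A + B · fromBlocks( diag_j(z·cos(zL_j)/sin(zL_j)), diag_j(−z/sin(zL_j)), diag_j(−z/sin(zL_j)), diag_j(z·cos(zL_j)/sin(zL_j)) ) ) tends to 0 as z → 0 within the punctured complex plane (along the filter 𝓝[≠] 0). -/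
open Matrix
open scoped Topology

/-- `sin z / z → 1` as `z → 0` in the punctured plane. -/
lemma sin_div_self_tendsto :
    Filter.Tendsto (fun z : ℂ => Complex.sin z / z) (𝓝[≠] 0) (𝓝 1) := by
  have h := (Complex.hasDerivAt_sin 0)
  rw [hasDerivAt_iff_tendsto_slope] at h
  simp only [Complex.cos_zero] at h
  refine h.congr (fun z => ?_)
  simp [slope_def_field, Complex.sin_zero]

/-- `z / sin (z * l) → 1 / l` as `z → 0` in the punctured plane, for `l ≠ 0`. -/
lemma self_div_sin_tendsto (l : ℝ) (hl : l ≠ 0) :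
    Filter.Tendsto (fun z : ℂ => z / Complex.sin (z * l)) (𝓝[≠] 0) (𝓝 (l : ℂ)⁻¹) := by
  have hlC : (l : ℂ) ≠ 0 := by exact_mod_cast Complex.ofReal_ne_zero.mpr hl
  have hmap : Filter.Tendsto (fun z : ℂ => z * l) (𝓝[≠] 0) (𝓝[≠] 0) := by
    have h0 : Filter.Tendsto (fun z : ℂ => z * l) (𝓝 0) (𝓝 (0 * l)) :=
      (continuous_id.mul continuous_const).tendsto 0
    rw [zero_mul] at h0
    refine tendsto_nhdsWithin_of_tendsto_nhds_of_eventually_within _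
      (h0.mono_left nhdsWithin_le_nhds) ?_
    filter_upwards [self_mem_nhdsWithin] with z hz
    exact mul_ne_zero hz hlC
  have h1 : Filter.Tendsto (fun z : ℂ => Complex.sin (z * l) / (z * l)) (𝓝[≠] 0) (𝓝 1) :=
    sin_div_self_tendsto.comp hmap
  have h2 : Filter.Tendsto (fun z : ℂ => (Complex.sin (z * l) / (z * l))⁻¹) (𝓝[≠] 0)
      (𝓝 (1 : ℂ)⁻¹) := h1.inv₀ one_ne_zero
  have h3 : Filter.Tendsto (fun z : ℂ => (l : ℂ)⁻¹ * (Complex.sin (z * l) / (z * l))⁻¹)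
      (𝓝[≠] 0) (𝓝 ((l : ℂ)⁻¹ * (1 : ℂ)⁻¹)) := Filter.Tendsto.const_mul _ h2
  simp only [inv_one, mul_one] at h3
  refine h3.congr (fun z => ?_)
  rcases eq_or_ne (Complex.sin (z * l)) 0 with hs | hs
  · simp [hs]
  · rw [inv_div]
    field_simp

/-- The determinant `det(z A + B·[[z cot zL, −z csc zL],[−z csc zL, z cot zL]])` of a general
massless graph Dirac operator tends to `0` as `z → 0` in the punctured plane, showing the
secular function `f(z) = z^{4B−1} det(A + B·[[cot zL, −csc zL],[−csc zL, cot zL]])` is regular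
at `z = 0`. -/
theorem dirac_secular_det_limit_at_zero
    (n : ℕ) (hn : 1 ≤ n) (L : Fin n → ℝ) (hL : ∀ j, 0 < L j)
    (A B : Matrix (Fin n ⊕ Fin n) (Fin n ⊕ Fin n) ℂ) :
    Filter.Tendsto
      (fun z : ℂ =>
        (z • A + B * Matrix.fromBlocks
          (Matrix.diagonal fun j => z * Complex.cos (z * L j) / Complex.sin (z * L j))
          (Matrix.diagonal fun j => -z / Complex.sin (z * L j))
          (Matrix.diagonal fun j => -z / Complex.sin (z * L j))
          (Matrix.diagonal fun j => z * Complex.cos (z * L j) / Complex.sin (z * L j))).det)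
      (𝓝[≠] 0) (𝓝 0) := by
  classical
  -- continuous assembly map
  set G : ℂ × (Fin n → ℂ) × (Fin n → ℂ) → ℂ := fun p =>
    (p.1 • A + B * Matrix.fromBlocks (Matrix.diagonal p.2.1) (Matrix.diagonal p.2.2)
      (Matrix.diagonal p.2.2) (Matrix.diagonal p.2.1)).det with hG
  have hGcont : Continuous G := by
    apply Continuous.matrix_det
    refine Continuous.add (continuous_fst.smul continuous_const) (Continuous.mul continuous_const ?_)
    exact Continuous.matrix_fromBlocks
      ((continuous_fst.comp continuous_snd).matrix_diagonal)
      ((continuous_snd.comp continuous_snd).matrix_diagonal)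
      ((continuous_snd.comp continuous_snd).matrix_diagonal)
      ((continuous_fst.comp continuous_snd).matrix_diagonal)
  -- the input tendsto
  have hcot : ∀ j, Filter.Tendsto (fun z : ℂ => z * Complex.cos (z * L j) / Complex.sin (z * L j))
      (𝓝[≠] 0) (𝓝 ((L j : ℂ)⁻¹)) := by
    intro j
    have h1 := self_div_sin_tendsto (L j) (hL j).ne'
    have h2 : Filter.Tendsto (fun z : ℂ => Complex.cos (z * L j)) (𝓝[≠] 0) (𝓝 1) := by
      have : Filter.Tendsto (fun z : ℂ => Complex.cos (z * L j)) (𝓝 0) (𝓝 (Complex.cos (0 * L j))) :=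
        (Complex.continuous_cos.comp (continuous_id.mul continuous_const)).tendsto 0
      simpa using this.mono_left nhdsWithin_le_nhds
    have := h1.mul h2
    simp only [mul_one] at this
    refine this.congr fun z => ?_
    rw [div_mul_eq_mul_div, mul_comm z (Complex.cos (z * L j))]
  have hcsc : ∀ j, Filter.Tendsto (fun z : ℂ => -z / Complex.sin (z * L j))
      (𝓝[≠] 0) (𝓝 (-(L j : ℂ)⁻¹)) := by
    intro j
    have := (self_div_sin_tendsto (L j) (hL j).ne').neg
    refine this.congr fun z => ?_
    rw [neg_div]
  have hinput : Filter.Tendsto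
      (fun z : ℂ => (z,
        (fun j => z * Complex.cos (z * L j) / Complex.sin (z * L j)),
        (fun j => -z / Complex.sin (z * L j))))
      (𝓝[≠] 0)
      (𝓝 ((0 : ℂ), (fun j => (L j : ℂ)⁻¹), (fun j => -(L j : ℂ)⁻¹))) := by
    refine Filter.Tendsto.prodMk_nhds (nhdsWithin_le_nhds) ?_
    exact Filter.Tendsto.prodMk_nhds (tendsto_pi_nhds.mpr hcot) (tendsto_pi_nhds.mpr hcsc)
  have hcomp := (hGcont.tendsto _).comp hinput
  -- compute the limit value
  have hval : G ((0 : ℂ), (fun j => (L j : ℂ)⁻¹), (fun j => -(L j : ℂ)⁻¹)) = 0 := by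
    simp only [hG, zero_smul, zero_add]
    rw [Matrix.det_mul]
    have hdet0 : (Matrix.fromBlocks (Matrix.diagonal fun j => (L j : ℂ)⁻¹)
        (Matrix.diagonal fun j => -(L j : ℂ)⁻¹)
        (Matrix.diagonal fun j => -(L j : ℂ)⁻¹)
        (Matrix.diagonal fun j => (L j : ℂ)⁻¹)).det = 0 := by
      rw [← Matrix.exists_mulVec_eq_zero_iff]
      refine ⟨Sum.elim (fun _ => 1) (fun _ => 1), ?_, ?_⟩
      · intro h
        have := congrFun h (Sum.inl ⟨0, hn⟩)
        simp at this
      · rw [Matrix.fromBlocks_mulVec]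
        ext (i | i) <;> simp [Matrix.mulVec_diagonal]
    rw [hdet0, mul_zero]
  rw [hval] at hcomp
  exact hcomp
end

section
/- Let n ≥ 1, let L : Fin n → ℝ with L_j > 0, let A, B be 2n×2n complex matrices, and let α ∈ (0, π). Then the function u ↦ det( A + B · fromBlocks( diag_j(cos(uL_je^{iα})/sin(uL_je^{iα})), diag_j(−1/sin(uL_je^{iα})), diag_j(−1/sin(uL_je^{iα})), diag_j(cos(uL_je^{iα})/sin(uL_je^{iα})) ) ) (for u ∈ ℝ) tends to det(A − i•B) as u → +∞. -/
/-!
On the ray `u ↦ u L e^{iα}` the imaginary part `u L sin α` tends to `+∞`, so `q = e^{iz}` tends to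
`0`. Writing `cot z = (q² + 1) / (i (1 - q²))` and `1 / sin z = 2q / (i (1 - q²))` shows that
`cot z → -i` and `1 / sin z → 0`, hence the block matrix tends to `-i • 1`, and the determinant,
being continuous, tends to `det (A - i B)`.
-/

open Matrix Filter Complex
open scoped Topology

namespace Complex

lemma inv_sin_eq_exp_ratio (z : ℂ) :
    (sin z)⁻¹ = 2 * exp (I * z) / (I * (1 - exp (2 * I * z))) := by
  have hq : exp (I * z) ≠ 0 := exp_ne_zero _
  have h : sin z = I * (1 - exp (2 * I * z)) / (2 * exp (I * z)) := by
    rw [sin, show 2 * I * z = I * z + I * z by ring, exp_add, mul_comm z, neg_mul, exp_neg]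
    field_simp
  rw [h, inv_div]

lemma tendsto_exp_mul_I_mul_comap_im_atTop {k : ℝ} (hk : 0 < k) :
    Tendsto (fun z : ℂ => exp (k * I * z)) (comap im atTop) (𝓝 0) := by
  rw [tendsto_zero_iff_norm_tendsto_zero]
  have hre : ∀ z : ℂ, (k * I * z).re = -(k * z.im) := fun z => by simp
  simp only [norm_exp, hre]
  exact Real.tendsto_exp_atBot.comp <| tendsto_neg_atTop_atBot.comp <|
    (tendsto_comap.const_mul_atTop hk)

lemma tendsto_cot_comap_im_atTop : Tendsto cot (comap im atTop) (𝓝 (-I)) := by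
  have hq : Tendsto (fun z : ℂ => exp (2 * I * z)) (comap im atTop) (𝓝 0) := by
    simpa using tendsto_exp_mul_I_mul_comap_im_atTop (k := 2) two_pos
  have h := (hq.add_const 1).div (tendsto_const_nhds.mul (tendsto_const_nhds.sub hq))
    (by simp : I * (1 - 0) ≠ 0)
  rw [show ((0 : ℂ) + 1) / (I * (1 - 0)) = -I by simp] at h
  exact h.congr fun z => (cot_eq_exp_ratio z).symm

lemma tendsto_inv_sin_comap_im_atTop :
    Tendsto (fun z => (sin z)⁻¹) (comap im atTop) (𝓝 0) := by
  have hq : Tendsto (fun z : ℂ => exp (I * z)) (comap im atTop) (𝓝 0) := by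
    simpa using tendsto_exp_mul_I_mul_comap_im_atTop (k := 1) one_pos
  have hq2 : Tendsto (fun z : ℂ => exp (2 * I * z)) (comap im atTop) (𝓝 0) := by
    simpa using tendsto_exp_mul_I_mul_comap_im_atTop (k := 2) two_pos
  have h := (hq.const_mul 2).div (tendsto_const_nhds.mul (tendsto_const_nhds.sub hq2))
    (by simp : I * (1 - 0) ≠ 0)
  rw [mul_zero, zero_div] at h
  exact h.congr fun z => (inv_sin_eq_exp_ratio z).symm

lemma tendsto_ofReal_mul_comap_im_atTop {w : ℂ} (hw : 0 < w.im) :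
    Tendsto (fun u : ℝ => (u : ℂ) * w) atTop (comap im atTop) := by
  refine tendsto_comap_iff.mpr ?_
  simpa [Function.comp_def] using tendsto_id.atTop_mul_const hw

end Complex

lemma tendsto_fromBlocks_diagonal_symm {ι m R : Type*} [Semiring R] [TopologicalSpace R]
    [DecidableEq m] {l : Filter ι} {c s : ι → m → R} {a : R}
    (hc : Tendsto c l (𝓝 fun _ => a)) (hs : Tendsto s l (𝓝 0)) :
    Tendsto (fun x => fromBlocks (diagonal (c x)) (diagonal (s x)) (diagonal (s x))
      (diagonal (c x))) l (𝓝 (a • (1 : Matrix (m ⊕ m) (m ⊕ m) R))) := by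
  have hlim : fromBlocks (diagonal fun _ => a) (diagonal 0) (diagonal 0) (diagonal fun _ => a)
      = a • (1 : Matrix (m ⊕ m) (m ⊕ m) R) := by
    rw [show diagonal (0 : m → R) = 0 from diagonal_zero, fromBlocks_diagonal, smul_one_eq_diagonal]
    congr 1
    ext (i | i) <;> rfl
  have hcont : Continuous fun p : (m → R) × (m → R) =>
      fromBlocks (diagonal p.1) (diagonal p.2) (diagonal p.2) (diagonal p.1) :=
    continuous_fst.matrix_diagonal.matrix_fromBlocks continuous_snd.matrix_diagonal
      continuous_snd.matrix_diagonal continuous_fst.matrix_diagonal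
  rw [← hlim]
  exact (hcont.tendsto _).comp (hc.prodMk_nhds hs)

theorem dirac_secular_det_limit_ray_general
    (n : ℕ) (L : Fin n → ℝ) (hL : ∀ j, 0 < L j)
    (A B : Matrix (Fin n ⊕ Fin n) (Fin n ⊕ Fin n) ℂ)
    (α : ℝ) (hα : α ∈ Set.Ioo 0 Real.pi) :
    Filter.Tendsto
      (fun u : ℝ =>
        (A + B * Matrix.fromBlocks
          (Matrix.diagonal fun j => Complex.cos (u * L j * Complex.exp (Complex.I * α)) /
            Complex.sin (u * L j * Complex.exp (Complex.I * α)))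
          (Matrix.diagonal fun j => -1 / Complex.sin (u * L j * Complex.exp (Complex.I * α)))
          (Matrix.diagonal fun j => -1 / Complex.sin (u * L j * Complex.exp (Complex.I * α)))
          (Matrix.diagonal fun j => Complex.cos (u * L j * Complex.exp (Complex.I * α)) /
            Complex.sin (u * L j * Complex.exp (Complex.I * α)))).det)
      Filter.atTop
      (𝓝 ((A - Complex.I • B).det)) := by
  have hray : ∀ j, Tendsto (fun u : ℝ => (u : ℂ) * L j * exp (I * α)) atTop (comap im atTop) :=
    fun j => by
      simp only [mul_assoc]
      refine tendsto_ofReal_mul_comap_im_atTop ?_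
      rw [mul_comm I, im_ofReal_mul, exp_ofReal_mul_I_im]
      exact mul_pos (hL j) (Real.sin_pos_of_pos_of_lt_pi hα.1 hα.2)
  have hcot := tendsto_pi_nhds.mpr fun j => tendsto_cot_comap_im_atTop.comp (hray j)
  have hcsc : Tendsto (fun u : ℝ => fun j => -(sin (u * L j * exp (I * α)))⁻¹) atTop (𝓝 0) :=
    tendsto_pi_nhds.mpr fun j => by
      simpa using (tendsto_inv_sin_comap_im_atTop.comp (hray j)).neg
  have hdet : Continuous fun X : Matrix (Fin n ⊕ Fin n) (Fin n ⊕ Fin n) ℂ => (A + B * X).det :=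
    (continuous_const.add (continuous_const.matrix_mul continuous_id)).matrix_det
  have h := (hdet.tendsto _).comp (tendsto_fromBlocks_diagonal_symm hcot hcsc)
  rw [Matrix.mul_smul, mul_one, neg_smul, ← sub_eq_add_neg] at h
  simpa only [Function.comp_def, cot_eq_cos_div_sin, neg_div, one_div] using h

/-- Along the branch-cut ray of angle `α ∈ (0,π)`, the secular determinant of a general
massless graph Dirac operator tends to `det(A − iB)` as `u → +∞`. -/
theorem dirac_secular_det_limit_ray
    (n : ℕ) (hn : 1 ≤ n) (L : Fin n → ℝ) (hL : ∀ j, 0 < L j)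
    (A B : Matrix (Fin n ⊕ Fin n) (Fin n ⊕ Fin n) ℂ)
    (α : ℝ) (hα : α ∈ Set.Ioo 0 Real.pi) :
    Filter.Tendsto
      (fun u : ℝ =>
        (A + B * Matrix.fromBlocks
          (Matrix.diagonal fun j => Complex.cos (u * L j * Complex.exp (Complex.I * α)) /
            Complex.sin (u * L j * Complex.exp (Complex.I * α)))
          (Matrix.diagonal fun j => -1 / Complex.sin (u * L j * Complex.exp (Complex.I * α)))
          (Matrix.diagonal fun j => -1 / Complex.sin (u * L j * Complex.exp (Complex.I * α)))
          (Matrix.diagonal fun j => Complex.cos (u * L j * Complex.exp (Complex.I * α)) /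
            Complex.sin (u * L j * Complex.exp (Complex.I * α)))).det)
      Filter.atTop
      (𝓝 ((A - Complex.I • B).det)) :=
  dirac_secular_det_limit_ray_general n L hL A B α hα
end

section
/- Let B ≥ 1 and let L_b > 0 for b ∈ Fin B. Define F : ℂ → ℂ by F(s) = 2 (e^{−iπs} + 1) · ζ(s) · ∑_{b=1}^{B} (π/L_b)^{−s}, where ζ is the Riemann zeta function and (π/L_b)^{−s} is the complex power of the positive real π/L_b. Then F has a derivative at s = 0 equal to iπB − 2B·log(2π) + 2 ∑_{b=1}^{B} log(π/L_b). -/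
open Complex

lemma hasDerivAt_riemannZeta_zero :
    HasDerivAt riemannZeta (-(Real.log (2 * Real.pi)) / 2 : ℂ) 0 := by
  have hζ := (differentiableAt_riemannZeta zero_ne_one).hasDerivAt
  rwa [deriv_riemannZeta_zero, ← ofReal_ofNat, ← ofReal_mul,
    ← ofReal_log (by positivity)] at hζ

lemma hasDerivAt_ofReal_cpow_neg {x : ℝ} (hx : 0 < x) (s : ℂ) :
    HasDerivAt (fun s : ℂ => (x : ℂ) ^ (-s)) (-(Real.log x : ℂ) * (x : ℂ) ^ (-s)) s := by
  have h := (hasDerivAt_id' s).fun_neg.const_cpow (c := (x : ℂ))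
    (Or.inl (ofReal_ne_zero.2 hx.ne'))
  rw [ofReal_log hx.le]
  exact h.congr_deriv (by ring)

lemma hasDerivAt_exp_neg_mul_add_one (c s : ℂ) :
    HasDerivAt (fun s : ℂ => exp (-(c * s)) + 1) (-c * exp (-(c * s))) s :=
  (((hasDerivAt_id' s).const_mul c).fun_neg.cexp.add_const 1).congr_deriv (by ring)

theorem dirac_zeta_pole_contribution_deriv_at_zero_general
    (B : ℕ) (L : Fin B → ℝ) (hL : ∀ b, 0 < L b) :
    HasDerivAt
      (fun s : ℂ => 2 * (Complex.exp (-(Real.pi * Complex.I * s)) + 1) * riemannZeta s *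
        ∑ b, ((Real.pi / L b : ℝ) : ℂ) ^ (-s))
      (Complex.I * Real.pi * B - 2 * B * (Real.log (2 * Real.pi) : ℂ) +
        2 * ∑ b, (Real.log (Real.pi / L b) : ℂ))
      0 := by
  have hsum : HasDerivAt (fun s : ℂ => ∑ b, ((Real.pi / L b : ℝ) : ℂ) ^ (-s))
      (∑ b, -(Real.log (Real.pi / L b) : ℂ) * ((Real.pi / L b : ℝ) : ℂ) ^ (-(0 : ℂ))) 0 :=
    HasDerivAt.fun_sum fun b _ => hasDerivAt_ofReal_cpow_neg (div_pos Real.pi_pos (hL b)) 0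
  have h := (((hasDerivAt_exp_neg_mul_add_one (Real.pi * I) 0).const_mul 2).mul
    hasDerivAt_riemannZeta_zero).mul hsum
  refine h.congr_deriv ?_
  simp only [Pi.mul_apply, mul_zero, neg_zero, exp_zero, cpow_zero, mul_one, riemannZeta_zero,
    Finset.sum_const, Finset.card_univ, Fintype.card_fin, nsmul_eq_mul, Finset.sum_neg_distrib]
  ring

/-- The pole contribution `F(s) = 2(e^{−iπs}+1) ζ(s) ∑_b (π/L_b)^{−s}` to the spectral zeta
function of a massless graph Dirac operator has derivative at `s = 0` equal to
`iπB − 2B log(2π) + 2 ∑_b log(π/L_b)`. -/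
theorem dirac_zeta_pole_contribution_deriv_at_zero
    (B : ℕ) (hB : 1 ≤ B) (L : Fin B → ℝ) (hL : ∀ b, 0 < L b) :
    HasDerivAt
      (fun s : ℂ => 2 * (Complex.exp (-(Real.pi * Complex.I * s)) + 1) * riemannZeta s *
        ∑ b, ((Real.pi / L b : ℝ) : ℂ) ^ (-s))
      (Complex.I * Real.pi * B - 2 * B * (Real.log (2 * Real.pi) : ℂ) +
        2 * ∑ b, (Real.log (Real.pi / L b) : ℂ))
      0 :=
  dirac_zeta_pole_contribution_deriv_at_zero_general B L hL
end
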